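/- Let X, Y, Z be real vector spaces equipped with quasi-norms ‖·‖_X, ‖·‖_Y, ‖·‖_Z with quasi-triangle constants κ_X, κ_Y, κ_Z, and let τ : X × Y → Z be a bilinear map which is bounded with constant M, i.e. ‖τ(x,y)‖_Z ≤ M·‖x‖_X·‖y‖_Y for all x ∈ X, y ∈ Y. Let n ≥ 1, let f = (f_1,…,f_n) ∈ X^n and g = (g_1,…,g_n) ∈ Y^n, let 0 < c₁ ≤ c₂, and let A and B be reducing matrices (with constants c₁, c₂) for f with respect to ‖·‖_X and for g with respect to ‖·‖_Y, respectively. Then there is a constant C depending only on n, c₁, c₂, κ_X, κ_Y, κ_Z such that ‖∑_{i=1}^n τ(f_i, g_i)‖_Z ≤ C·M·‖A·B‖_op. -/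

import Mathlib

open scoped TensorProduct

universe u v w

open Matrix

/-- The Euclidean norm on `Fin k → ℝ`. -/
noncomputable def euclNorm {k : ℕ} (x : Fin k → ℝ) : ℝ := Real.sqrt (∑ i, x i ^ 2)

/-- The operator norm of an `n × n` real matrix with respect to the Euclidean norm. -/
noncomputable def opNorm {n : ℕ} (M : Matrix (Fin n) (Fin n) ℝ) : ℝ :=
  ‖Matrix.toEuclideanCLM (𝕜 := ℝ) M‖

/-- A quasi-norm on a real vector space `Z` with quasi-triangle constant `κ`. -/
def IsQuasiNorm {Z : Type*} [AddCommGroup Z] [Module ℝ Z] (N : Z → ℝ) (κ : ℝ) : Prop :=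
  (∀ z, 0 ≤ N z) ∧ (∀ (l : ℝ) (z : Z), N (l • z) = |l| * N z) ∧
    ∀ z w, N (z + w) ≤ κ * (N z + N w)

/-- `A` is a reducing matrix for the tuple `f` with respect to `N` (with constants
`c₁ ≤ c₂`): `A` is positive semidefinite and `c₁|Ae| ≤ N(∑ eᵢ • fᵢ) ≤ c₂|Ae|`. -/
def IsReducing {X : Type*} [AddCommGroup X] [Module ℝ X] (N : X → ℝ)
    {n : ℕ} (f : Fin n → X) (c₁ c₂ : ℝ) (A : Matrix (Fin n) (Fin n) ℝ) : Prop :=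
  A.PosSemidef ∧ ∀ e : Fin n → ℝ,
    c₁ * euclNorm (A.mulVec e) ≤ N (∑ i, e i • f i) ∧
      N (∑ i, e i • f i) ≤ c₂ * euclNorm (A.mulVec e)

lemma IsQuasiNorm.zero {Z : Type*} [AddCommGroup Z] [Module ℝ Z] {N : Z → ℝ} {κ : ℝ}
    (hN : IsQuasiNorm N κ) : N 0 = 0 := by
  have := hN.2.1 0 0
  simpa using this

lemma IsQuasiNorm.sum_le {Z : Type*} [AddCommGroup Z] [Module ℝ Z] {N : Z → ℝ} {κ : ℝ}
    (hN : IsQuasiNorm N κ) (hκ : 1 ≤ κ) {ι : Type*} (s : Finset ι) (z : ι → Z) :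
    N (∑ i ∈ s, z i) ≤ κ ^ s.card * ∑ i ∈ s, N (z i) := by
  classical
  induction s using Finset.cons_induction with
  | empty => simp [hN.zero]
  | cons a s ha ih =>
    rw [Finset.sum_cons, Finset.sum_cons, Finset.card_cons]
    have h1 := hN.2.2 (z a) (∑ i ∈ s, z i)
    have hκ0 : (0:ℝ) ≤ κ := le_trans zero_le_one hκ
    have hκp : (1:ℝ) ≤ κ ^ s.card := one_le_pow₀ hκ
    have hza : 0 ≤ N (z a) := hN.1 _
    have hsum : 0 ≤ ∑ i ∈ s, N (z i) := Finset.sum_nonneg fun i _ => hN.1 _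
    calc N (z a + ∑ i ∈ s, z i) ≤ κ * (N (z a) + N (∑ i ∈ s, z i)) := h1
      _ ≤ κ * (N (z a) + κ ^ s.card * ∑ i ∈ s, N (z i)) := by
          apply mul_le_mul_of_nonneg_left _ hκ0
          linarith [ih]
      _ ≤ κ ^ (s.card + 1) * (N (z a) + ∑ i ∈ s, N (z i)) := by
          rw [pow_succ, mul_comm (κ ^ s.card) κ, mul_assoc]
          apply mul_le_mul_of_nonneg_left _ hκ0
          rw [mul_add]
          have : N (z a) ≤ κ ^ s.card * N (z a) := le_mul_of_one_le_left hza hκp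
          linarith

lemma euclNorm_eq_norm {k : ℕ} (x : EuclideanSpace ℝ (Fin k)) :
    euclNorm (⇑x) = ‖x‖ := by
  rw [EuclideanSpace.norm_eq, euclNorm]
  congr 1
  exact Finset.sum_congr rfl fun i _ => (sq_abs _).symm

lemma euclNorm_smul {k : ℕ} (c : ℝ) (x : Fin k → ℝ) :
    euclNorm (c • x) = |c| * euclNorm x := by
  unfold euclNorm
  have h : ∑ i, (c • x) i ^ 2 = c ^ 2 * ∑ i, x i ^ 2 := by
    rw [Finset.mul_sum]
    refine Finset.sum_congr rfl fun i _ => ?_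
    simp [mul_pow]
  rw [h, Real.sqrt_mul (sq_nonneg c), Real.sqrt_sq_eq_abs]

lemma euclNorm_mulVec_le {k : ℕ} (M : Matrix (Fin k) (Fin k) ℝ) (v : Fin k → ℝ) :
    euclNorm (M.mulVec v) ≤ opNorm M * euclNorm v := by
  set x : EuclideanSpace ℝ (Fin k) := (WithLp.equiv 2 (Fin k → ℝ)).symm v with hx
  have h1 : Matrix.toEuclideanCLM (𝕜 := ℝ) M x =
      (WithLp.equiv 2 (Fin k → ℝ)).symm (Matrix.toLin' M v) :=
    Matrix.toEuclideanCLM_toLp M v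
  have h2 : euclNorm (M.mulVec v) = ‖Matrix.toEuclideanCLM (𝕜 := ℝ) M x‖ := by
    rw [h1]
    rw [← euclNorm_eq_norm]
    congr 1
  rw [h2]
  have h3 : euclNorm v = ‖x‖ := euclNorm_eq_norm x
  rw [h3]
  exact (Matrix.toEuclideanCLM (𝕜 := ℝ) M).le_opNorm x

set_option synthInstance.maxHeartbeats 1000000 in
lemma opNorm_transpose {k : ℕ} (M : Matrix (Fin k) (Fin k) ℝ) :
    opNorm Mᵀ = opNorm M := by
  have h : Mᵀ = star M := (Matrix.conjTranspose_eq_transpose_of_trivial M).symm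
  rw [opNorm, h, map_star, ContinuousLinearMap.star_eq_adjoint]
  exact ContinuousLinearMap.adjoint.norm_map _

/-- **Vector-valued extension of a bounded bilinear operator between quasi-normed spaces**
(Proposition 4.1): if `‖τ(x,y)‖_Z ≤ M ‖x‖_X ‖y‖_Y`, then
`‖∑ τ(fᵢ, gᵢ)‖_Z ≲ M ‖A·B‖_op` for reducing matrices `A, B` of `f, g`. -/
theorem stmt14 (n : ℕ) (hn : 1 ≤ n) (c₁ c₂ κX κY κZ : ℝ) (hc₁ : 0 < c₁) (hc₁₂ : c₁ ≤ c₂)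
    (hκX : 1 ≤ κX) (hκY : 1 ≤ κY) (hκZ : 1 ≤ κZ) :
    ∃ C : ℝ, 0 < C ∧
      ∀ (X : Type u) (Y : Type v) (Z : Type w)
        [AddCommGroup X] [Module ℝ X] [AddCommGroup Y] [Module ℝ Y]
        [AddCommGroup Z] [Module ℝ Z]
        (NX : X → ℝ) (NY : Y → ℝ) (NZ : Z → ℝ),
        IsQuasiNorm NX κX → IsQuasiNorm NY κY → IsQuasiNorm NZ κZ →
        ∀ (τ : X →ₗ[ℝ] Y →ₗ[ℝ] Z) (M : ℝ), 0 ≤ M →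
          (∀ (x : X) (y : Y), NZ (τ x y) ≤ M * NX x * NY y) →
          ∀ (f : Fin n → X) (g : Fin n → Y) (A B : Matrix (Fin n) (Fin n) ℝ),
            IsReducing NX f c₁ c₂ A → IsReducing NY g c₁ c₂ B →
            NZ (∑ i, τ (f i) (g i)) ≤ C * M * opNorm (A * B) := by
  have hc₂ : 0 < c₂ := lt_of_lt_of_le hc₁ hc₁₂
  have hκZ0 : (0:ℝ) < κZ := lt_of_lt_of_le one_pos hκZ
  refine ⟨(n : ℝ) * κZ ^ n * c₂ ^ 2,
    mul_pos (mul_pos (by exact_mod_cast hn) (pow_pos hκZ0 n)) (pow_pos hc₂ 2), ?_⟩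
  intro X Y Z _ _ _ _ _ _ NX NY NZ hNX hNY hNZ τ M hM hτ f g A B hA hB
  classical
  -- eigenbasis of A
  have hAh : A.IsHermitian := hA.1.1
  set u := hAh.eigenvectorBasis with hu
  set lam := hAh.eigenvalues with hlam
  -- orthonormality of columns
  set U : Matrix (Fin n) (Fin n) ℝ := Matrix.of (fun k i => u k i) with hUdef
  have hUUT : U * Uᵀ = 1 := by
    ext k l
    have h := (orthonormal_iff_ite.mp u.orthonormal) k l
    simp only [EuclideanSpace.inner_eq_star_dotProduct] at h
    simpa [Matrix.mul_apply, Matrix.one_apply, dotProduct, hUdef,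
      mul_comm] using h
  have hUTU : Uᵀ * U = 1 := mul_eq_one_comm.mp hUUT
  have horth : ∀ i j : Fin n, (∑ k, u k i * u k j) = if i = j then (1:ℝ) else 0 := by
    intro i j
    have h := congrFun (congrFun hUTU i) j
    simpa [Matrix.mul_apply, Matrix.transpose_apply, Matrix.one_apply, hUdef] using h
  -- change of basis identity
  have key : (∑ i, τ (f i) (g i)) = ∑ k, τ (∑ i, u k i • f i) (∑ j, u k j • g j) := by
    have step : ∀ k, τ (∑ i, u k i • f i) (∑ j, u k j • g j)
        = ∑ i, ∑ j, (u k i * u k j) • τ (f i) (g j) := by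
      intro k
      simp only [map_sum, _root_.map_smul, LinearMap.sum_apply, LinearMap.smul_apply,
        Finset.smul_sum, smul_smul]
      rw [Finset.sum_comm]
      exact Finset.sum_congr rfl fun i _ => Finset.sum_congr rfl fun j _ => by rw [mul_comm]
    calc (∑ i, τ (f i) (g i))
        = ∑ i, ∑ j, (if i = j then (1:ℝ) else 0) • τ (f i) (g j) := by
          refine Finset.sum_congr rfl fun i _ => ?_
          simp
      _ = ∑ i, ∑ j, (∑ k, u k i * u k j) • τ (f i) (g j) := by
          simp_rw [horth]
      _ = ∑ i, ∑ j, ∑ k, (u k i * u k j) • τ (f i) (g j) := by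
          simp_rw [Finset.sum_smul]
      _ = ∑ i, ∑ k, ∑ j, (u k i * u k j) • τ (f i) (g j) := by
          exact Finset.sum_congr rfl fun i _ => Finset.sum_comm
      _ = ∑ k, ∑ i, ∑ j, (u k i * u k j) • τ (f i) (g j) := Finset.sum_comm
      _ = ∑ k, τ (∑ i, u k i • f i) (∑ j, u k j • g j) := by
          refine Finset.sum_congr rfl fun k _ => (step k).symm
  -- per-term bound
  have hterm : ∀ k, NZ (τ (∑ i, u k i • f i) (∑ j, u k j • g j))
      ≤ M * c₂ ^ 2 * opNorm (A * B) := by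
    intro k
    have hAvec : A.mulVec (⇑(u k)) = lam k • ⇑(u k) := hAh.mulVec_eigenvectorBasis k
    have hnorm1 : euclNorm (⇑(u k)) = 1 := by
      rw [euclNorm_eq_norm]
      exact u.orthonormal.1 k
    have hlamk : 0 ≤ lam k := hA.1.eigenvalues_nonneg k
    have hNXb : NX (∑ i, u k i • f i) ≤ c₂ * euclNorm (A.mulVec (⇑(u k))) :=
      (hA.2 (⇑(u k))).2
    have hNYb : NY (∑ j, u k j • g j) ≤ c₂ * euclNorm (B.mulVec (⇑(u k))) :=
      (hB.2 (⇑(u k))).2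
    have hAval : euclNorm (A.mulVec (⇑(u k))) = lam k := by
      rw [hAvec, euclNorm_smul, hnorm1, mul_one, abs_of_nonneg hlamk]
    -- the product bound
    have hBA : lam k * euclNorm (B.mulVec (⇑(u k))) ≤ opNorm (A * B) := by
      have h1 : lam k * euclNorm (B.mulVec (⇑(u k)))
          = euclNorm ((B * A).mulVec (⇑(u k))) := by
        rw [← Matrix.mulVec_mulVec, hAvec, Matrix.mulVec_smul, euclNorm_smul,
          abs_of_nonneg hlamk]
      have h2 : euclNorm ((B * A).mulVec (⇑(u k))) ≤ opNorm (B * A) * euclNorm (⇑(u k)) :=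
        euclNorm_mulVec_le _ _
      have h3 : opNorm (B * A) = opNorm (A * B) := by
        have hAt : Aᵀ = A := by
          rw [← Matrix.conjTranspose_eq_transpose_of_trivial]; exact hA.1.1
        have hBt : Bᵀ = B := by
          rw [← Matrix.conjTranspose_eq_transpose_of_trivial]; exact hB.1.1
        have : (A * B)ᵀ = B * A := by rw [Matrix.transpose_mul, hAt, hBt]
        rw [← this, opNorm_transpose]
      rw [h1]
      calc euclNorm ((B * A).mulVec (⇑(u k))) ≤ opNorm (B * A) * euclNorm (⇑(u k)) := h2
        _ = opNorm (A * B) := by rw [h3, hnorm1, mul_one]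
    have hNX0 : 0 ≤ NX (∑ i, u k i • f i) := hNX.1 _
    have hNY0 : 0 ≤ NY (∑ j, u k j • g j) := hNY.1 _
    have hB0 : 0 ≤ euclNorm (B.mulVec (⇑(u k))) := Real.sqrt_nonneg _
    calc NZ (τ (∑ i, u k i • f i) (∑ j, u k j • g j))
        ≤ M * NX (∑ i, u k i • f i) * NY (∑ j, u k j • g j) := hτ _ _
      _ ≤ M * (c₂ * euclNorm (A.mulVec (⇑(u k)))) * (c₂ * euclNorm (B.mulVec (⇑(u k)))) := by
          apply mul_le_mul
          · exact mul_le_mul_of_nonneg_left hNXb hM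
          · exact hNYb
          · exact hNY0
          · exact mul_nonneg hM (mul_nonneg hc₂.le (Real.sqrt_nonneg _))
      _ = M * c₂ ^ 2 * (lam k * euclNorm (B.mulVec (⇑(u k)))) := by
          rw [hAval]; ring
      _ ≤ M * c₂ ^ 2 * opNorm (A * B) := by
          apply mul_le_mul_of_nonneg_left hBA
          exact mul_nonneg hM (pow_nonneg hc₂.le 2)
  -- assemble
  have hsum := hNZ.sum_le hκZ (Finset.univ : Finset (Fin n))
    (fun k => τ (∑ i, u k i • f i) (∑ j, u k j • g j))
  rw [Finset.card_univ, Fintype.card_fin] at hsum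
  calc NZ (∑ i, τ (f i) (g i))
      = NZ (∑ k, τ (∑ i, u k i • f i) (∑ j, u k j • g j)) := by rw [key]
    _ ≤ κZ ^ n * ∑ k, NZ (τ (∑ i, u k i • f i) (∑ j, u k j • g j)) := hsum
    _ ≤ κZ ^ n * ∑ _k : Fin n, M * c₂ ^ 2 * opNorm (A * B) := by
        apply mul_le_mul_of_nonneg_left _ (pow_nonneg hκZ0.le n)
        exact Finset.sum_le_sum fun k _ => hterm k
    _ = (n : ℝ) * κZ ^ n * c₂ ^ 2 * M * opNorm (A * B) := by
        rw [Finset.sum_const, Finset.card_univ, Fintype.card_fin]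
        simp [nsmul_eq_mul]
        ring
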